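/- Let k be a field, G a finite group, w a finite-dimensional kG-module, and X any kG-module. Then the coevaluation map coev_X : X → w ⊗_k w* ⊗_k X, x ↦ Σ_i e_i ⊗ e_i* ⊗ x (where (e_i) is a k-basis of w with dual basis (e_i*)), is a kG-linear P(w)-preenvelope of X: its target w ⊗ w* ⊗ X is w-projective, and every kG-homomorphism X → Z into a w-projective module Z factors through coev_X. (The class P(w) is pre-enveloping.) -/

import Mathlib

open CategoryTheory MonoidalCategory Limits

/-- `X` is `w`-projective: `X` is a direct summand of `w ⊗ Y` (diagonal `G`-action)
for some `kG`-module `Y`. -/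
def IsRelProjective {k G : Type} [Field k] [Group G] (w X : Rep k G) : Prop :=
  ∃ (Y : Rep k G) (i : X ⟶ w ⊗ Y) (r : w ⊗ Y ⟶ X), i ≫ r = 𝟙 X

/-- `f` factors through some `w`-projective module. -/
def FactorsThroughRelProj {k G : Type} [Field k] [Group G] (w : Rep k G)
    {X Y : Rep k G} (f : X ⟶ Y) : Prop :=
  ∃ (Z : Rep k G) (g : X ⟶ Z) (h : Z ⟶ Y), IsRelProjective w Z ∧ g ≫ h = f

/-- The coevaluation map `X → w ⊗ w* ⊗ X`, `x ↦ ∑ᵢ eᵢ ⊗ eᵢ* ⊗ x`, as a `k`-linear map. -/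
noncomputable def coevLin {k G : Type} [Field k] [Group G] (w X : Rep k G)
    [FiniteDimensional k w.V] :
    (X.V : Type) →ₗ[k] (((w ⊗ Rep.of w.ρ.dual) ⊗ X).V : Type) :=
  TensorProduct.map (coevaluation k w.V) LinearMap.id ∘ₗ
    (TensorProduct.lid k X.V).symm.toLinearMap

/-!
In `Rep k G` the module `w` and its contragredient `w*` form an exact pairing: the coevaluation
`k → w ⊗ w*` and the contraction `w* ⊗ w → k` are `G`-equivariant, and the zigzag identities are
those of the underlying vector spaces. Hence `w ⊗ -` is right adjoint to `w* ⊗ -`, with unit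
`coev_X` at `X`, so every map `X → w ⊗ Y` factors through `coev_X`; maps into a retract of
`w ⊗ Y` factor as well.
-/

open TensorProduct

theorem dualTensorHom_comm_coevaluation (k V : Type*) [Field k] [AddCommGroup V] [Module k V]
    [FiniteDimensional k V] :
    dualTensorHom k V V (TensorProduct.comm k V (Module.Dual k V) (coevaluation k V 1)) =
      LinearMap.id := by
  ext v
  simpa [coevaluation_apply_one, Module.Basis.coord_apply] using
    (Module.Basis.ofVectorSpace k V).sum_repr v

/-- Under `V ⊗ V* ≃ End V` the coevaluation is the identity, which every `ρ g` fixes by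
conjugation. -/
theorem Representation.map_dual_coevaluation {k G V : Type*} [Field k] [Group G] [AddCommGroup V]
    [Module k V] [FiniteDimensional k V] (ρ : Representation k G V) (g : G) :
    map (ρ g) (ρ.dual g) (coevaluation k V 1) = coevaluation k V 1 := by
  let comm := _root_.TensorProduct.comm k V (Module.Dual k V)
  have hinj : Function.Injective (dualTensorHom k V V ∘ comm) :=
    (dualTensorHom_bijective ..).1.comp comm.injective
  apply hinj
  calc dualTensorHom k V V (comm (map (ρ g) (ρ.dual g) (coevaluation k V 1)))
      = dualTensorHom k V V (map (ρ.dual g) (ρ g) (comm (coevaluation k V 1))) := by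
        rw [map_comm]
    _ = ρ.linHom ρ g (dualTensorHom k V V (comm (coevaluation k V 1))) :=
        LinearMap.congr_fun (ρ.dualTensorHom_comm ρ g) _
    _ = dualTensorHom k V V (comm (coevaluation k V 1)) := by
        rw [dualTensorHom_comm_coevaluation, Representation.linHom_apply]
        ext v
        simp

namespace Rep

variable {k G : Type} [Field k] [Group G] (w : Rep k G) [FiniteDimensional k w.V]

noncomputable instance exactPairingDual : ExactPairing w (Rep.of w.ρ.dual) where
  coevaluation' := ofHom ⟨coevaluation k w.V, fun g => by
    ext
    exact (w.ρ.map_dual_coevaluation g).symm⟩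
  evaluation' := ofHom ⟨contractLeft k w.V, fun g => by
    ext f v
    simp [Representation.dual_apply, Module.Dual.transpose_apply]⟩
  coevaluation_evaluation' := by
    ext1; ext1
    exact contractLeft_assoc_coevaluation k w.V
  evaluation_coevaluation' := by
    ext1; ext1
    exact contractLeft_assoc_coevaluation' k w.V

end Rep

theorem CategoryTheory.exists_coevaluation_whiskerRight_comp_eq {C : Type*} [Category C]
    [MonoidalCategory C] (w w' : C) [ExactPairing w w'] {X Y : C} (f : X ⟶ w ⊗ Y) :
    ∃ g : (w ⊗ w') ⊗ X ⟶ w ⊗ Y, ((λ_ X).inv ≫ η_ w w' ▷ X) ≫ g = f :=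
  ⟨(α_ w w' X).hom ≫ w ◁ (tensorLeftHomEquiv X w w' Y).symm f, by
    rw [Category.assoc]
    exact (tensorLeftHomEquiv X w w' Y).apply_symm_apply f⟩

theorem coevaluation_is_preenvelope (k G : Type) [Field k] [Group G]
    (w : Rep k G) [FiniteDimensional k w.V] (X : Rep k G) :
    ∃ η : X ⟶ (w ⊗ Rep.of w.ρ.dual) ⊗ X,
      η.hom = coevLin w X ∧
      IsRelProjective w ((w ⊗ Rep.of w.ρ.dual) ⊗ X) ∧
      ∀ (Z : Rep k G), IsRelProjective w Z →
        ∀ f : X ⟶ Z, ∃ g : (w ⊗ Rep.of w.ρ.dual) ⊗ X ⟶ Z, η ≫ g = f := by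
  refine ⟨(λ_ X).inv ≫ η_ w (Rep.of w.ρ.dual) ▷ X, rfl, ?_, ?_⟩
  · exact ⟨Rep.of w.ρ.dual ⊗ X, (α_ _ _ _).hom, (α_ _ _ _).inv, Iso.hom_inv_id _⟩
  · rintro Z ⟨Y, i, r, hir⟩ f
    obtain ⟨g, hg⟩ := exists_coevaluation_whiskerRight_comp_eq w (Rep.of w.ρ.dual) (f ≫ i)
    exact ⟨g ≫ r, by rw [← Category.assoc, hg, Category.assoc, hir, Category.comp_id]⟩
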